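/- arXiv:2603.01066 — 4 statements merged into one kernel-verified Lean document; each statement's English description precedes it below -/
import Mathlib

section
/- Let p ≥ 1 be a real number, let a, b ≥ 0 be real numbers not both zero, let f₁, f₂ > 0 be real numbers, and set f := (a·f₁^p + b·f₂^p)^{1/p}. Then for all real numbers s, t one has the identity (p−1)·f^{1−2p}·[ a·(f^p·f₁^{p−2} − a·f₁^{2p−2})·s² + b·(f^p·f₂^{p−2} − b·f₂^{2p−2})·t² − 2·a·b·f₁^{p−1}·f₂^{p−1}·s·t ] = a·b·(p−1)·f^{1−2p}·f₁^{p−2}·f₂^{p−2}·(f₂·s − f₁·t)², and in particular the left-hand side is nonnegative. -/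
/-- Pointwise computation showing the first-order part `(I)` of the Hessian of the
`p`-linear combination `f = (a·f₁^p + b·f₂^p)^(1/p)` is nonnegative. -/
theorem stmt_0 (p a b f₁ f₂ f : ℝ) (hp : 1 ≤ p) (ha : 0 ≤ a) (hb : 0 ≤ b)
    (hab : ¬ (a = 0 ∧ b = 0)) (hf₁ : 0 < f₁) (hf₂ : 0 < f₂)
    (hf : f = (a * f₁ ^ p + b * f₂ ^ p) ^ (1 / p)) :
    ∀ s t : ℝ,
      (p - 1) * f ^ (1 - 2 * p) *
          (a * (f ^ p * f₁ ^ (p - 2) - a * f₁ ^ (2 * p - 2)) * s ^ 2 +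
            b * (f ^ p * f₂ ^ (p - 2) - b * f₂ ^ (2 * p - 2)) * t ^ 2 -
            2 * a * b * f₁ ^ (p - 1) * f₂ ^ (p - 1) * s * t) =
        a * b * (p - 1) * f ^ (1 - 2 * p) * f₁ ^ (p - 2) * f₂ ^ (p - 2) *
          (f₂ * s - f₁ * t) ^ 2 ∧
      0 ≤ (p - 1) * f ^ (1 - 2 * p) *
          (a * (f ^ p * f₁ ^ (p - 2) - a * f₁ ^ (2 * p - 2)) * s ^ 2 +
            b * (f ^ p * f₂ ^ (p - 2) - b * f₂ ^ (2 * p - 2)) * t ^ 2 -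
            2 * a * b * f₁ ^ (p - 1) * f₂ ^ (p - 1) * s * t) := by
  intro s t
  have hp0 : p ≠ 0 := by linarith
  have hA : 0 < a * f₁ ^ p + b * f₂ ^ p := by
    rcases not_and_or.mp hab with h | h
    · have ha' : 0 < a := lt_of_le_of_ne ha (Ne.symm h)
      have : 0 < a * f₁ ^ p := mul_pos ha' (Real.rpow_pos_of_pos hf₁ p)
      nlinarith [mul_nonneg hb (Real.rpow_pos_of_pos hf₂ p).le]
    · have hb' : 0 < b := lt_of_le_of_ne hb (Ne.symm h)
      have : 0 < b * f₂ ^ p := mul_pos hb' (Real.rpow_pos_of_pos hf₂ p)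
      nlinarith [mul_nonneg ha (Real.rpow_pos_of_pos hf₁ p).le]
  have hfpos : 0 < f := hf ▸ Real.rpow_pos_of_pos hA _
  have hfp : f ^ p = a * f₁ ^ p + b * f₂ ^ p := by
    rw [hf, ← Real.rpow_mul hA.le, one_div, inv_mul_cancel₀ hp0, Real.rpow_one]
  have h1 : f₁ ^ p = f₁ ^ (p - 2) * f₁ ^ 2 := by
    rw [← Real.rpow_two, ← Real.rpow_add hf₁]; ring_nf
  have h2 : f₂ ^ p = f₂ ^ (p - 2) * f₂ ^ 2 := by
    rw [← Real.rpow_two, ← Real.rpow_add hf₂]; ring_nf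
  have h1' : f₁ ^ (p - 1) = f₁ ^ (p - 2) * f₁ := by
    rw [show p - 1 = p - 2 + 1 by ring, Real.rpow_add hf₁, Real.rpow_one]
  have h2' : f₂ ^ (p - 1) = f₂ ^ (p - 2) * f₂ := by
    rw [show p - 1 = p - 2 + 1 by ring, Real.rpow_add hf₂, Real.rpow_one]
  have h1'' : f₁ ^ (2 * p - 2) = f₁ ^ p * f₁ ^ (p - 2) := by
    rw [← Real.rpow_add hf₁]; ring_nf
  have h2'' : f₂ ^ (2 * p - 2) = f₂ ^ p * f₂ ^ (p - 2) := by
    rw [← Real.rpow_add hf₂]; ring_nf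
  have key : (p - 1) * f ^ (1 - 2 * p) *
          (a * (f ^ p * f₁ ^ (p - 2) - a * f₁ ^ (2 * p - 2)) * s ^ 2 +
            b * (f ^ p * f₂ ^ (p - 2) - b * f₂ ^ (2 * p - 2)) * t ^ 2 -
            2 * a * b * f₁ ^ (p - 1) * f₂ ^ (p - 1) * s * t) =
        a * b * (p - 1) * f ^ (1 - 2 * p) * f₁ ^ (p - 2) * f₂ ^ (p - 2) *
          (f₂ * s - f₁ * t) ^ 2 := by
    rw [h1', h2', h1'', h2'', hfp, h1, h2]; ring
  refine ⟨key, ?_⟩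
  rw [key]
  have hp1 : (0:ℝ) ≤ p - 1 := by linarith
  exact mul_nonneg (mul_nonneg (mul_nonneg (mul_nonneg (mul_nonneg
    (mul_nonneg ha hb) hp1) (Real.rpow_pos_of_pos hfpos _).le)
    (Real.rpow_pos_of_pos hf₁ _).le) (Real.rpow_pos_of_pos hf₂ _).le) (sq_nonneg _)
end

section
/- Let n ≥ 1, let U be an open subset of the n-dimensional real Euclidean space, let x ∈ U, let p ≥ 1 be a real number, let a, b ≥ 0 be real numbers not both zero, and let f₁, f₂ : U → ℝ be twice differentiable at x with f₁(x) > 0 and f₂(x) > 0. Then f := (a·f₁^p + b·f₂^p)^{1/p} is twice differentiable at x, and for all vectors Y, Z its second derivative satisfies: D²f(x)(Y,Z) = (1−p)·f(x)^{1−2p}·( a·f₁(x)^{p−1}·Df₁(x)(Y) + b·f₂(x)^{p−1}·Df₂(x)(Y) )·( a·f₁(x)^{p−1}·Df₁(x)(Z) + b·f₂(x)^{p−1}·Df₂(x)(Z) ) + (p−1)·f(x)^{1−p}·( a·f₁(x)^{p−2}·Df₁(x)(Y)·Df₁(x)(Z) + b·f₂(x)^{p−2}·Df₂(x)(Y)·Df₂(x)(Z)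 ) + f(x)^{1−p}·( a·f₁(x)^{p−1}·D²f₁(x)(Y,Z) + b·f₂(x)^{p−1}·D²f₂(x)(Y,Z) ). -/
open Filter Real

set_option maxHeartbeats 2000000 in
/-- Hessian decomposition of the `p`-linear combination `f = (a·f₁^p + b·f₂^p)^(1/p)`. -/
theorem stmt_2 (n : ℕ) (hn : 1 ≤ n) (U : Set (EuclideanSpace ℝ (Fin n)))
    (hU : IsOpen U) (x : EuclideanSpace ℝ (Fin n)) (hx : x ∈ U)
    (p a b : ℝ) (hp : 1 ≤ p) (ha : 0 ≤ a) (hb : 0 ≤ b) (hab : ¬ (a = 0 ∧ b = 0))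
    (f₁ f₂ : EuclideanSpace ℝ (Fin n) → ℝ)
    (hf₁ : ∀ᶠ y in nhds x, DifferentiableAt ℝ f₁ y)
    (hf₂ : ∀ᶠ y in nhds x, DifferentiableAt ℝ f₂ y)
    (hf₁' : DifferentiableAt ℝ (fderiv ℝ f₁) x)
    (hf₂' : DifferentiableAt ℝ (fderiv ℝ f₂) x)
    (hf₁x : 0 < f₁ x) (hf₂x : 0 < f₂ x)
    (f : EuclideanSpace ℝ (Fin n) → ℝ)
    (hf : ∀ y, f y = (a * f₁ y ^ p + b * f₂ y ^ p) ^ (1 / p)) :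
    (∀ᶠ y in nhds x, DifferentiableAt ℝ f y) ∧
    DifferentiableAt ℝ (fderiv ℝ f) x ∧
    ∀ Y Z : EuclideanSpace ℝ (Fin n),
      fderiv ℝ (fderiv ℝ f) x Y Z =
        (1 - p) * f x ^ (1 - 2 * p) *
            ((a * f₁ x ^ (p - 1) * fderiv ℝ f₁ x Y + b * f₂ x ^ (p - 1) * fderiv ℝ f₂ x Y) *
              (a * f₁ x ^ (p - 1) * fderiv ℝ f₁ x Z + b * f₂ x ^ (p - 1) * fderiv ℝ f₂ x Z)) +
          (p - 1) * f x ^ (1 - p) *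
            (a * f₁ x ^ (p - 2) * fderiv ℝ f₁ x Y * fderiv ℝ f₁ x Z +
              b * f₂ x ^ (p - 2) * fderiv ℝ f₂ x Y * fderiv ℝ f₂ x Z) +
          f x ^ (1 - p) *
            (a * f₁ x ^ (p - 1) * fderiv ℝ (fderiv ℝ f₁) x Y Z +
              b * f₂ x ^ (p - 1) * fderiv ℝ (fderiv ℝ f₂) x Y Z) := by
  have hp0 : (0:ℝ) < p := lt_of_lt_of_le one_pos hp
  have hpne : p ≠ 0 := ne_of_gt hp0
  set g : EuclideanSpace ℝ (Fin n) → ℝ := fun y => a * f₁ y ^ p + b * f₂ y ^ p with hgdef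
  have hab' : 0 < a ∨ 0 < b := by
    rcases ha.lt_or_eq with h | h
    · exact Or.inl h
    rcases hb.lt_or_eq with h' | h'
    · exact Or.inr h'
    exact absurd ⟨h.symm, h'.symm⟩ hab
  have hposg : ∀ y, 0 < f₁ y → 0 < f₂ y → 0 < g y := by
    intro y h1 h2
    rcases hab' with hA | hB
    · have hA1 := mul_pos hA (Real.rpow_pos_of_pos h1 p)
      have hA2 : 0 ≤ b * f₂ y ^ p := mul_nonneg hb (Real.rpow_pos_of_pos h2 p).le
      simpa [hgdef] using add_pos_of_pos_of_nonneg hA1 hA2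
    · have hB1 := mul_pos hB (Real.rpow_pos_of_pos h2 p)
      have hB2 : 0 ≤ a * f₁ y ^ p := mul_nonneg ha (Real.rpow_pos_of_pos h1 p).le
      simpa [hgdef] using add_pos_of_nonneg_of_pos hB2 hB1
  have hev : ∀ᶠ y in nhds x,
      DifferentiableAt ℝ f₁ y ∧ DifferentiableAt ℝ f₂ y ∧ 0 < f₁ y ∧ 0 < f₂ y := by
    have hc1 : ContinuousAt f₁ x := hf₁.self_of_nhds.continuousAt
    have hc2 : ContinuousAt f₂ x := hf₂.self_of_nhds.continuousAt
    have h1p : ∀ᶠ y in nhds x, 0 < f₁ y := hc1.eventually_mem (Ioi_mem_nhds hf₁x)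
    have h2p : ∀ᶠ y in nhds x, 0 < f₂ y := hc2.eventually_mem (Ioi_mem_nhds hf₂x)
    filter_upwards [hf₁, hf₂, h1p, h2p] with y h1 h2 h3 h4
    exact ⟨h1, h2, h3, h4⟩
  -- the first derivative
  set D : EuclideanSpace ℝ (Fin n) → (EuclideanSpace ℝ (Fin n) →L[ℝ] ℝ) := fun y =>
      (a * (g y ^ (1 / p - 1) * f₁ y ^ (p - 1))) • fderiv ℝ f₁ y +
      (b * (g y ^ (1 / p - 1) * f₂ y ^ (p - 1))) • fderiv ℝ f₂ y with hDdef
  have hDf : ∀ᶠ y in nhds x, HasFDerivAt f (D y) y := by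
    filter_upwards [hev] with y hy
    obtain ⟨h1, h2, h1p, h2p⟩ := hy
    have hgy : 0 < g y := hposg y h1p h2p
    have hA : HasFDerivAt (fun z => f₁ z ^ p) ((p * f₁ y ^ (p - 1)) • fderiv ℝ f₁ y) y :=
      h1.hasFDerivAt.rpow_const (Or.inl h1p.ne')
    have hB : HasFDerivAt (fun z => f₂ z ^ p) ((p * f₂ y ^ (p - 1)) • fderiv ℝ f₂ y) y :=
      h2.hasFDerivAt.rpow_const (Or.inl h2p.ne')
    have hG : HasFDerivAt g
        (a • ((p * f₁ y ^ (p - 1)) • fderiv ℝ f₁ y) + b • ((p * f₂ y ^ (p - 1)) • fderiv ℝ f₂ y))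
        y := (hA.const_mul a).add (hB.const_mul b)
    have h0 := hG.rpow_const (p := 1 / p) (Or.inl hgy.ne')
    have h0' : HasFDerivAt f ((1 / p * g y ^ (1 / p - 1)) •
        (a • ((p * f₁ y ^ (p - 1)) • fderiv ℝ f₁ y) +
          b • ((p * f₂ y ^ (p - 1)) • fderiv ℝ f₂ y))) y :=
      h0.congr_of_eventuallyEq (Eventually.of_forall fun z => hf z)
    have hEq : (1 / p * g y ^ (1 / p - 1)) •
        (a • ((p * f₁ y ^ (p - 1)) • fderiv ℝ f₁ y) +
          b • ((p * f₂ y ^ (p - 1)) • fderiv ℝ f₂ y)) = D y := by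
      rw [hDdef]
      simp only [smul_add, smul_smul]
      congr 1 <;> · congr 1; field_simp
    rw [← hEq]
    exact h0'
  have hDeq : fderiv ℝ f =ᶠ[nhds x] D := hDf.mono fun y h => h.fderiv
  -- data at x
  have hd1 := hf₁.self_of_nhds
  have hd2 := hf₂.self_of_nhds
  have hgx0 : 0 < g x := hposg x hf₁x hf₂x
  have hgd : DifferentiableAt ℝ g x :=
    ((hd1.rpow_const (Or.inr hp)).const_mul a).add ((hd2.rpow_const (Or.inr hp)).const_mul b)
  have hc₁d : DifferentiableAt ℝ (fun y => a * (g y ^ (1 / p - 1) * f₁ y ^ (p - 1))) x :=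
    ((hgd.rpow_const (Or.inl hgx0.ne')).mul (hd1.rpow_const (Or.inl hf₁x.ne'))).const_mul a
  have hc₂d : DifferentiableAt ℝ (fun y => b * (g y ^ (1 / p - 1) * f₂ y ^ (p - 1))) x :=
    ((hgd.rpow_const (Or.inl hgx0.ne')).mul (hd2.rpow_const (Or.inl hf₂x.ne'))).const_mul b
  have hDd : DifferentiableAt ℝ D x := by
    rw [hDdef]
    exact (hc₁d.smul hf₁').add (hc₂d.smul hf₂')
  have h2' : DifferentiableAt ℝ (fderiv ℝ f) x := hDd.congr_of_eventuallyEq hDeq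
  refine ⟨hDf.mono fun y h => h.differentiableAt, h2', fun Y Z => ?_⟩
  rw [hDeq.fderiv_eq]
  -- reduce to a scalar-valued derivative
  have happ : fderiv ℝ D x Y Z = fderiv ℝ (fun y => D y Z) x Y := by
    have hcomp := ((ContinuousLinearMap.apply ℝ ℝ Z).hasFDerivAt.comp x hDd.hasFDerivAt).fderiv
    have hfun : ((ContinuousLinearMap.apply ℝ ℝ Z) ∘ D) = fun y => D y Z := by
      funext y; simp [Function.comp]
    rw [hfun] at hcomp
    rw [hcomp]
    simp
  rw [happ]
  -- build the explicit derivative of y ↦ D y Z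
  have hA1 : HasFDerivAt (fun z => f₁ z ^ p) ((p * f₁ x ^ (p - 1)) • fderiv ℝ f₁ x) x :=
    hd1.hasFDerivAt.rpow_const (Or.inl hf₁x.ne')
  have hA2 : HasFDerivAt (fun z => f₂ z ^ p) ((p * f₂ x ^ (p - 1)) • fderiv ℝ f₂ x) x :=
    hd2.hasFDerivAt.rpow_const (Or.inl hf₂x.ne')
  have hG : HasFDerivAt g
      (a • ((p * f₁ x ^ (p - 1)) • fderiv ℝ f₁ x) + b • ((p * f₂ x ^ (p - 1)) • fderiv ℝ f₂ x))
      x := (hA1.const_mul a).add (hA2.const_mul b)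
  have hge := hG.rpow_const (p := 1 / p - 1) (Or.inl hgx0.ne')
  have hq1 := hd1.hasFDerivAt.rpow_const (p := p - 1) (Or.inl hf₁x.ne')
  have hq2 := hd2.hasFDerivAt.rpow_const (p := p - 1) (Or.inl hf₂x.ne')
  have hc1 := (hge.mul hq1).const_mul a
  have hc2 := (hge.mul hq2).const_mul b
  have hh1 : HasFDerivAt (fun y => fderiv ℝ f₁ y Z)
      ((ContinuousLinearMap.apply ℝ ℝ Z).comp (fderiv ℝ (fderiv ℝ f₁) x)) x :=
    (ContinuousLinearMap.apply ℝ ℝ Z).hasFDerivAt.comp x hf₁'.hasFDerivAt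
  have hh2 : HasFDerivAt (fun y => fderiv ℝ f₂ y Z)
      ((ContinuousLinearMap.apply ℝ ℝ Z).comp (fderiv ℝ (fderiv ℝ f₂) x)) x :=
    (ContinuousLinearMap.apply ℝ ℝ Z).hasFDerivAt.comp x hf₂'.hasFDerivAt
  have hsum := (hc1.mul hh1).add (hc2.mul hh2)
  have hfun : (fun y => D y Z) = (fun y =>
      a * (g y ^ (1 / p - 1) * f₁ y ^ (p - 1)) * fderiv ℝ f₁ y Z +
      b * (g y ^ (1 / p - 1) * f₂ y ^ (p - 1)) * fderiv ℝ f₂ y Z) := by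
    funext y
    rw [hDdef]
    simp [smul_eq_mul]
  rw [hfun, (show HasFDerivAt (fun y => a * (g y ^ (1 / p - 1) * f₁ y ^ (p - 1)) * fderiv ℝ f₁ y Z +
      b * (g y ^ (1 / p - 1) * f₂ y ^ (p - 1)) * fderiv ℝ f₂ y Z) _ x from hsum).fderiv]
  -- now everything is scalar; finish with algebra
  have e1 : f x ^ (1 - 2 * p) = g x ^ (1 / p - 1 - 1) := by
    rw [hf x, ← Real.rpow_mul hgx0.le]
    congr 1
    field_simp
    ring
  have e2 : f x ^ (1 - p) = g x ^ (1 / p - 1) := by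
    rw [hf x, ← Real.rpow_mul hgx0.le]
    congr 1
    field_simp
  have e3 : f₁ x ^ (p - 1 - 1) = f₁ x ^ (p - 2) := by rw [show p - 1 - 1 = p - 2 by ring]
  have e4 : f₂ x ^ (p - 1 - 1) = f₂ x ^ (p - 2) := by rw [show p - 1 - 1 = p - 2 by ring]
  simp only [ContinuousLinearMap.add_apply, ContinuousLinearMap.smul_apply,
    ContinuousLinearMap.comp_apply, ContinuousLinearMap.apply_apply, smul_eq_mul,
    ContinuousLinearMap.coe_smul', Pi.smul_apply, Pi.mul_apply]
  rw [e1, e2, e3, e4]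
  field_simp
  ring
end

section
/- Let n ≥ 1, let p ≥ 1 be a real number, let a, b ≥ 0 be real numbers not both zero, let f₁, f₂ > 0 be real numbers, let u, v be vectors in ℝⁿ, let H₁, H₂ be real symmetric n×n matrices, and let Q̂ be a linear map from ℝⁿ to the real symmetric n×n matrices. Set f := (a·f₁^p + b·f₂^p)^{1/p}, w := a·f₁^{p−1}·u + b·f₂^{p−1}·v, g := f^{1−p}·w, and H := (1−p)·f^{1−2p}·(w·wᵀ) + (p−1)·f^{1−p}·( a·f₁^{p−2}·(u·uᵀ) + b·f₂^{p−2}·(v·vᵀ) ) + f^{1−p}·( a·f₁^{p−1}·H₁ + b·f₂^{p−1}·H₂ ), where x·xᵀ denotes the outer product of a vector with itself. If the matrices H₁ − (1/2)·Q̂(u) + f₁·I and H₂ − (1/2)·Q̂(v) + f₂·I are positive definite, then the matrix H − (1/2)·Q̂(g) + f·I is positive definite (I denotes the n×n identity matrix). -/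
open Matrix

lemma quad_vmv {n : ℕ} (w x : Fin n → ℝ) :
    x ⬝ᵥ (Matrix.vecMulVec w w) *ᵥ x = (w ⬝ᵥ x) ^ 2 := by
  simp only [Matrix.mulVec, dotProduct, Matrix.vecMulVec_apply, sq,
    Finset.mul_sum, Finset.sum_mul]
  rw [Finset.sum_comm]
  exact Finset.sum_congr rfl fun i _ => Finset.sum_congr rfl fun j _ => by ring

lemma vmv_symm {n : ℕ} (w : Fin n → ℝ) : (Matrix.vecMulVec w w).IsSymm := by
  ext i j; simp [Matrix.IsSymm, Matrix.vecMulVec_apply, mul_comm]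

/-- Pointwise linear-algebraic core of the `p`-sum lemma: `τ[f]` of the `p`-linear
combination is positive definite whenever `τ[f₁]` and `τ[f₂]` are. -/
theorem stmt_3 (n : ℕ) (hn : 1 ≤ n) (p a b f₁ f₂ : ℝ) (hp : 1 ≤ p)
    (ha : 0 ≤ a) (hb : 0 ≤ b) (hab : ¬ (a = 0 ∧ b = 0))
    (hf₁ : 0 < f₁) (hf₂ : 0 < f₂)
    (u v : Fin n → ℝ)
    (H₁ H₂ : Matrix (Fin n) (Fin n) ℝ) (hH₁ : H₁.IsSymm) (hH₂ : H₂.IsSymm)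
    (Q : (Fin n → ℝ) →ₗ[ℝ] Matrix (Fin n) (Fin n) ℝ) (hQ : ∀ z, (Q z).IsSymm)
    (f : ℝ) (hf : f = (a * f₁ ^ p + b * f₂ ^ p) ^ (1 / p))
    (w : Fin n → ℝ) (hw : w = (a * f₁ ^ (p - 1)) • u + (b * f₂ ^ (p - 1)) • v)
    (g : Fin n → ℝ) (hg : g = f ^ (1 - p) • w)
    (H : Matrix (Fin n) (Fin n) ℝ)
    (hH : H = ((1 - p) * f ^ (1 - 2 * p)) • Matrix.vecMulVec w w +
      ((p - 1) * f ^ (1 - p)) • ((a * f₁ ^ (p - 2)) • Matrix.vecMulVec u u +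
        (b * f₂ ^ (p - 2)) • Matrix.vecMulVec v v) +
      f ^ (1 - p) • ((a * f₁ ^ (p - 1)) • H₁ + (b * f₂ ^ (p - 1)) • H₂))
    (hpos₁ : (H₁ - (1 / 2 : ℝ) • Q u + f₁ • (1 : Matrix (Fin n) (Fin n) ℝ)).PosDef)
    (hpos₂ : (H₂ - (1 / 2 : ℝ) • Q v + f₂ • (1 : Matrix (Fin n) (Fin n) ℝ)).PosDef) :
    (H - (1 / 2 : ℝ) • Q g + f • (1 : Matrix (Fin n) (Fin n) ℝ)).PosDef := by
  have hp0 : (0:ℝ) < p := lt_of_lt_of_le one_pos hp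
  have hS : 0 < a * f₁ ^ p + b * f₂ ^ p := by
    rcases not_and_or.mp hab with h | h
    · have ha' : 0 < a := ha.lt_of_ne (Ne.symm h)
      have : 0 < a * f₁ ^ p := mul_pos ha' (Real.rpow_pos_of_pos hf₁ p)
      nlinarith [mul_nonneg hb (Real.rpow_pos_of_pos hf₂ p).le]
    · have hb' : 0 < b := hb.lt_of_ne (Ne.symm h)
      have : 0 < b * f₂ ^ p := mul_pos hb' (Real.rpow_pos_of_pos hf₂ p)
      nlinarith [mul_nonneg ha (Real.rpow_pos_of_pos hf₁ p).le]
  have hfpos : 0 < f := by rw [hf]; exact Real.rpow_pos_of_pos hS _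
  have hfp : f ^ p = a * f₁ ^ p + b * f₂ ^ p := by
    rw [hf, ← Real.rpow_mul hS.le, one_div_mul_cancel hp0.ne', Real.rpow_one]
  subst hH; subst hg; subst hw
  have hc1 : f₁ ^ (p - 1) = f₁ ^ (p - 2) * f₁ := by
    rw [show p - 1 = (p - 2) + 1 by ring, Real.rpow_add hf₁, Real.rpow_one]
  have hc2 : f₂ ^ (p - 1) = f₂ ^ (p - 2) * f₂ := by
    rw [show p - 1 = (p - 2) + 1 by ring, Real.rpow_add hf₂, Real.rpow_one]
  have hc1p : f₁ ^ p = f₁ ^ (p - 2) * f₁ * f₁ := by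
    nth_rewrite 1 [show p = (p - 2) + 1 + 1 by ring]
    rw [Real.rpow_add hf₁, Real.rpow_add hf₁, Real.rpow_one]
  have hc2p : f₂ ^ p = f₂ ^ (p - 2) * f₂ * f₂ := by
    nth_rewrite 1 [show p = (p - 2) + 1 + 1 by ring]
    rw [Real.rpow_add hf₂, Real.rpow_add hf₂, Real.rpow_one]
  have hS' : 0 < a * (f₁ ^ (p - 2) * f₁ * f₁) + b * (f₂ ^ (p - 2) * f₂ * f₂) := by
    rw [← hc1p, ← hc2p]; exact hS
  have hfe1 : f ^ (1 - p) = f ^ (1 - 2 * p) * (a * (f₁ ^ (p - 2) * f₁ * f₁) + b * (f₂ ^ (p - 2) * f₂ * f₂)) := by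
    rw [← hc1p, ← hc2p, ← hfp, ← Real.rpow_add hfpos,
      show 1 - 2 * p + p = 1 - p by ring]
  have hfe : f = f ^ (1 - 2 * p) * (a * (f₁ ^ (p - 2) * f₁ * f₁) + b * (f₂ ^ (p - 2) * f₂ * f₂)) ^ 2 := by
    nth_rewrite 1 [show f = f ^ (1:ℝ) from (Real.rpow_one f).symm]
    rw [← hc1p, ← hc2p, ← hfp, sq, ← Real.rpow_add hfpos, ← Real.rpow_add hfpos,
      show 1 - 2 * p + (p + p) = 1 by ring]
  set c₁ := f₁ ^ (p - 2) with hc₁def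
  set c₂ := f₂ ^ (p - 2) with hc₂def
  set e := f ^ (1 - 2 * p) with hedef
  have hc₁ : 0 < c₁ := Real.rpow_pos_of_pos hf₁ _
  have hc₂ : 0 < c₂ := Real.rpow_pos_of_pos hf₂ _
  have he : 0 < e := Real.rpow_pos_of_pos hfpos _
  refine Matrix.posDef_iff_dotProduct_mulVec.mpr ⟨?_, ?_⟩
  · rw [Matrix.IsHermitian, Matrix.conjTranspose_eq_transpose_of_trivial]
    exact Matrix.IsSymm.add
      (Matrix.IsSymm.sub
        (Matrix.IsSymm.add
          (Matrix.IsSymm.add ((vmv_symm _).smul _)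
            ((Matrix.IsSymm.add ((vmv_symm _).smul _) ((vmv_symm _).smul _)).smul _))
          ((Matrix.IsSymm.add (hH₁.smul _) (hH₂.smul _)).smul _))
        ((hQ _).smul _))
      (Matrix.isSymm_one.smul _)
  · intro x hx
    have q1 : 0 < x ⬝ᵥ H₁ *ᵥ x - 1 / 2 * (x ⬝ᵥ (Q u) *ᵥ x) + f₁ * (x ⬝ᵥ x) := by
      have := hpos₁.dotProduct_mulVec_pos hx
      simpa [Matrix.sub_mulVec, Matrix.add_mulVec, Matrix.smul_mulVec,
        Matrix.one_mulVec, dotProduct_sub, dotProduct_add, dotProduct_smul,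
        smul_eq_mul] using this
    have q2 : 0 < x ⬝ᵥ H₂ *ᵥ x - 1 / 2 * (x ⬝ᵥ (Q v) *ᵥ x) + f₂ * (x ⬝ᵥ x) := by
      have := hpos₂.dotProduct_mulVec_pos hx
      simpa [Matrix.sub_mulVec, Matrix.add_mulVec, Matrix.smul_mulVec,
        Matrix.one_mulVec, dotProduct_sub, dotProduct_add, dotProduct_smul,
        smul_eq_mul] using this
    have hmix : 0 < a * (c₁ * f₁) * (x ⬝ᵥ H₁ *ᵥ x - 1 / 2 * (x ⬝ᵥ (Q u) *ᵥ x) + f₁ * (x ⬝ᵥ x))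
        + b * (c₂ * f₂) * (x ⬝ᵥ H₂ *ᵥ x - 1 / 2 * (x ⬝ᵥ (Q v) *ᵥ x) + f₂ * (x ⬝ᵥ x)) := by
      rcases not_and_or.mp hab with h | h
      · have ha' : 0 < a := ha.lt_of_ne (Ne.symm h)
        have h1 := mul_pos (mul_pos ha' (mul_pos hc₁ hf₁)) q1
        have h2 := mul_nonneg (mul_nonneg hb (mul_pos hc₂ hf₂).le) q2.le
        linarith
      · have hb' : 0 < b := hb.lt_of_ne (Ne.symm h)
        have h1 := mul_nonneg (mul_nonneg ha (mul_pos hc₁ hf₁).le) q1.le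
        have h2 := mul_pos (mul_pos hb' (mul_pos hc₂ hf₂)) q2
        linarith
    simp only [star_trivial, _root_.map_smul, _root_.map_add, Matrix.add_mulVec, Matrix.sub_mulVec,
      Matrix.smul_mulVec, Matrix.one_mulVec, dotProduct_add, dotProduct_sub,
      dotProduct_smul, smul_eq_mul]
    rw [quad_vmv, quad_vmv, quad_vmv]
    simp only [add_dotProduct, smul_dotProduct, smul_eq_mul]
    rw [hc1, hc2, hfe1, hfe]
    linarith [mul_pos (mul_pos he hS') hmix,
      mul_nonneg (mul_nonneg (mul_nonneg (mul_nonneg (sub_nonneg.2 hp) he.le)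
        (mul_nonneg ha hc₁.le)) (mul_nonneg hb hc₂.le))
        (sq_nonneg (f₂ * (u ⬝ᵥ x) - f₁ * (v ⬝ᵥ x)))]
end

section
/- Let E be a real inner product space, let p > 1 and q satisfy 1/p + 1/q = 1, let a, b ≥ 0 be real numbers, and let K, L ⊆ E be nonempty compact sets each containing the origin. Define the set a·K +̃_p b·L := { a^{1/p}·(1−t)^{1/q}·x + b^{1/p}·t^{1/q}·y : x ∈ K, y ∈ L, t ∈ [0,1] }, and for a set S define h_S(w) := sup_{z ∈ S} ⟨w, z⟩. Then for every w ∈ E: h_{a·K +̃_p b·L}(w) = ( a·h_K(w)^p + b·h_L(w)^p )^{1/p}. -/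
open Real

private lemma hoelder2 {p q A B s t : ℝ} (hp : 1 < p) (hpq : 1 / p + 1 / q = 1)
    (hA : 0 ≤ A) (hB : 0 ≤ B) (hs : 0 ≤ s) (ht : 0 ≤ t) :
    A ^ (1 / p) * s ^ (1 / q) + B ^ (1 / p) * t ^ (1 / q) ≤
      (A + B) ^ (1 / p) * (s + t) ^ (1 / q) := by
  have hcj : Real.HolderConjugate p q := Real.holderConjugate_iff.mpr ⟨hp, by rw [inv_eq_one_div, inv_eq_one_div]; exact hpq⟩
  have hp0 : p ≠ 0 := hcj.ne_zero
  have hq0 : q ≠ 0 := hcj.symm.ne_zero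
  have := Real.inner_le_Lp_mul_Lq_of_nonneg (s := Finset.univ)
    (f := ![A ^ (1 / p), B ^ (1 / p)]) (g := ![s ^ (1 / q), t ^ (1 / q)]) hcj
    (by intro i _; fin_cases i <;> simp <;> positivity)
    (by intro i _; fin_cases i <;> simp <;> positivity)
  simpa [Fin.sum_univ_two, one_div, Real.rpow_inv_rpow, hA, hB, hs, ht, hp0, hq0] using this

/-- The support function of the pointwise `L_p` Minkowski combination of two compact
sets containing the origin is the `ℓ_p`-combination of the support functions. -/
theorem stmt_5 {E : Type*} [NormedAddCommGroup E] [InnerProductSpace ℝ E]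
    (p q a b : ℝ) (hp : 1 < p) (hpq : 1 / p + 1 / q = 1)
    (ha : 0 ≤ a) (hb : 0 ≤ b)
    (K L : Set E) (hK : IsCompact K) (hL : IsCompact L)
    (hKne : K.Nonempty) (hLne : L.Nonempty)
    (hK0 : (0 : E) ∈ K) (hL0 : (0 : E) ∈ L) :
    ∀ w : E,
      sSup ((fun z => (inner ℝ w z : ℝ)) ''
        {z : E | ∃ x ∈ K, ∃ y ∈ L, ∃ t ∈ Set.Icc (0 : ℝ) 1,
          z = (a ^ (1 / p) * (1 - t) ^ (1 / q)) • x + (b ^ (1 / p) * t ^ (1 / q)) • y}) =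
      (a * (sSup ((fun z => (inner ℝ w z : ℝ)) '' K)) ^ p +
        b * (sSup ((fun z => (inner ℝ w z : ℝ)) '' L)) ^ p) ^ (1 / p) := by
  intro w
  have hcj : Real.HolderConjugate p q := Real.holderConjugate_iff.mpr ⟨hp, by rw [inv_eq_one_div, inv_eq_one_div]; exact hpq⟩
  have hp0 : p ≠ 0 := hcj.ne_zero
  have hq0 : q ≠ 0 := hcj.symm.ne_zero
  have hppos : 0 < p := hcj.pos
  have cont : Continuous fun z : E => (inner ℝ w z : ℝ) := continuous_const.inner continuous_id
  set hKw := sSup ((fun z => (inner ℝ w z : ℝ)) '' K) with hKwdef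
  set hLw := sSup ((fun z => (inner ℝ w z : ℝ)) '' L) with hLwdef
  have hbK : BddAbove ((fun z => (inner ℝ w z : ℝ)) '' K) := (hK.image cont).bddAbove
  have hbL : BddAbove ((fun z => (inner ℝ w z : ℝ)) '' L) := (hL.image cont).bddAbove
  have hKw0 : 0 ≤ hKw := le_csSup hbK ⟨0, hK0, by simp⟩
  have hLw0 : 0 ≤ hLw := le_csSup hbL ⟨0, hL0, by simp⟩
  obtain ⟨x₀, hx₀K, hx₀⟩ :
      ∃ x ∈ K, (inner ℝ w x : ℝ) = hKw := by
    obtain ⟨x₀, hx₀K, hx₀⟩ := (hK.image cont).sSup_mem (hKne.image _)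
    exact ⟨x₀, hx₀K, hx₀⟩
  obtain ⟨y₀, hy₀L, hy₀⟩ :
      ∃ y ∈ L, (inner ℝ w y : ℝ) = hLw := by
    obtain ⟨y₀, hy₀L, hy₀⟩ := (hL.image cont).sSup_mem (hLne.image _)
    exact ⟨y₀, hy₀L, hy₀⟩
  set A := a * hKw ^ p with hAdef
  set B := b * hLw ^ p with hBdef
  have hA : 0 ≤ A := mul_nonneg ha (rpow_nonneg hKw0 p)
  have hB : 0 ≤ B := mul_nonneg hb (rpow_nonneg hLw0 p)
  -- key: (c * x^p)^(1/p) = c^(1/p) * x for c, x ≥ 0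
  have key : ∀ c x : ℝ, 0 ≤ c → 0 ≤ x → (c * x ^ p) ^ (1 / p) = c ^ (1 / p) * x := by
    intro c x hc hx
    rw [Real.mul_rpow hc (rpow_nonneg hx p), one_div, Real.rpow_rpow_inv hx hp0]
  have keyA : A ^ (1 / p) = a ^ (1 / p) * hKw := key a hKw ha hKw0
  have keyB : B ^ (1 / p) = b ^ (1 / p) * hLw := key b hLw hb hLw0
  -- the combined set, and upper bound for every element of the image
  set M := {z : E | ∃ x ∈ K, ∃ y ∈ L, ∃ t ∈ Set.Icc (0 : ℝ) 1,
      z = (a ^ (1 / p) * (1 - t) ^ (1 / q)) • x + (b ^ (1 / p) * t ^ (1 / q)) • y} with hMdef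
  have hub : ∀ v ∈ (fun z => (inner ℝ w z : ℝ)) '' M, v ≤ (A + B) ^ (1 / p) := by
    rintro v ⟨z, ⟨x, hx, y, hy, t, ⟨ht0, ht1⟩, rfl⟩, rfl⟩
    have h1t : (0:ℝ) ≤ 1 - t := by linarith
    have hc1 : (0:ℝ) ≤ a ^ (1 / p) * (1 - t) ^ (1 / q) :=
      mul_nonneg (rpow_nonneg ha _) (rpow_nonneg h1t _)
    have hc2 : (0:ℝ) ≤ b ^ (1 / p) * t ^ (1 / q) :=
      mul_nonneg (rpow_nonneg hb _) (rpow_nonneg ht0 _)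
    have hxle : (inner ℝ w x : ℝ) ≤ hKw := le_csSup hbK ⟨x, hx, rfl⟩
    have hyle : (inner ℝ w y : ℝ) ≤ hLw := le_csSup hbL ⟨y, hy, rfl⟩
    have expand : (inner ℝ w ((a ^ (1 / p) * (1 - t) ^ (1 / q)) • x +
        (b ^ (1 / p) * t ^ (1 / q)) • y) : ℝ)
        = (a ^ (1 / p) * (1 - t) ^ (1 / q)) * (inner ℝ w x : ℝ)
          + (b ^ (1 / p) * t ^ (1 / q)) * (inner ℝ w y : ℝ) := by
      rw [inner_add_right, real_inner_smul_right, real_inner_smul_right]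
    show (inner ℝ w ((a ^ (1 / p) * (1 - t) ^ (1 / q)) • x + (b ^ (1 / p) * t ^ (1 / q)) • y) : ℝ)
      ≤ (A + B) ^ (1 / p)
    rw [expand]
    calc (a ^ (1 / p) * (1 - t) ^ (1 / q)) * (inner ℝ w x : ℝ)
          + (b ^ (1 / p) * t ^ (1 / q)) * (inner ℝ w y : ℝ)
        ≤ (a ^ (1 / p) * (1 - t) ^ (1 / q)) * hKw + (b ^ (1 / p) * t ^ (1 / q)) * hLw := by
          gcongr
      _ = A ^ (1 / p) * (1 - t) ^ (1 / q) + B ^ (1 / p) * t ^ (1 / q) := by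
          rw [keyA, keyB]; ring
      _ ≤ (A + B) ^ (1 / p) * ((1 - t) + t) ^ (1 / q) :=
          hoelder2 hp hpq hA hB h1t ht0
      _ = (A + B) ^ (1 / p) := by norm_num
  have hMne : ((fun z => (inner ℝ w z : ℝ)) '' M).Nonempty := by
    refine ⟨(inner ℝ w ((a ^ (1/p) * (1-(0:ℝ)) ^ (1/q)) • (0:E) + (b ^ (1/p) * (0:ℝ) ^ (1/q)) • (0:E)) : ℝ),
      ⟨_, ⟨0, hK0, 0, hL0, 0, ⟨le_refl _, zero_le_one⟩, rfl⟩, rfl⟩⟩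
  have hbM : BddAbove ((fun z => (inner ℝ w z : ℝ)) '' M) := ⟨(A + B) ^ (1 / p), hub⟩
  refine le_antisymm (csSup_le hMne hub) ?_
  -- lower bound
  rcases eq_or_lt_of_le (add_nonneg hA hB) with hS0 | hSpos
  · -- A + B = 0
    rw [← hS0, Real.zero_rpow (by positivity)]
    refine le_csSup hbM ⟨0, ⟨0, hK0, 0, hL0, 0, ⟨le_refl _, zero_le_one⟩, by simp⟩, by simp⟩
  · set S := A + B with hSdef
    have hSne : S ≠ 0 := ne_of_gt hSpos
    have ht₀mem : B / S ∈ Set.Icc (0:ℝ) 1 := by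
      constructor
      · positivity
      · rw [div_le_one hSpos]; linarith
    have h1t₀ : 1 - B / S = A / S := by field_simp; rw [hSdef]; ring
    set z₀ := (a ^ (1 / p) * (A / S) ^ (1 / q)) • x₀ + (b ^ (1 / p) * (B / S) ^ (1 / q)) • y₀
      with hz₀
    have hz₀M : z₀ ∈ M := ⟨x₀, hx₀K, y₀, hy₀L, B / S, ht₀mem, by rw [h1t₀]⟩
    have hval : (inner ℝ w z₀ : ℝ) = S ^ (1 / p) := by
      have expand : (inner ℝ w z₀ : ℝ)
          = (a ^ (1 / p) * (A / S) ^ (1 / q)) * hKw + (b ^ (1 / p) * (B / S) ^ (1 / q)) * hLw := by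
        rw [hz₀, inner_add_right, real_inner_smul_right, real_inner_smul_right, hx₀, hy₀]
      have selfmul : ∀ C : ℝ, 0 ≤ C → C ^ (1 / p) * C ^ (1 / q) = C := by
        intro C hC
        rcases hC.eq_or_lt with h | h
        · rw [← h, Real.zero_rpow (by positivity), zero_mul]
        · rw [← Real.rpow_add h, hpq, Real.rpow_one]
      have hterm : ∀ c hS' : ℝ, ∀ C : ℝ, 0 ≤ C →
          C ^ (1/p) = c * hS' → (c * (C / S) ^ (1 / q)) * hS' = C / S ^ (1 / q) := by
        intro c hS' C hC hCe
        rw [Real.div_rpow hC hSpos.le]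
        calc c * (C ^ (1/q) / S ^ (1/q)) * hS' = (c * hS') * C ^ (1/q) / S ^ (1/q) := by ring
          _ = C ^ (1/p) * C ^ (1/q) / S ^ (1/q) := by rw [hCe]
          _ = C / S ^ (1/q) := by rw [selfmul C hC]
      rw [expand, hterm _ _ _ hA keyA, hterm _ _ _ hB keyB, ← add_div]
      have : S / S ^ (1 / q) = S ^ ((1:ℝ) - 1 / q) := by
        rw [Real.rpow_sub hSpos, Real.rpow_one]
      rw [this]
      congr 1
      linarith
    calc S ^ (1 / p) = (inner ℝ w z₀ : ℝ) := hval.symm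
      _ ≤ sSup ((fun z => (inner ℝ w z : ℝ)) '' M) := le_csSup hbM ⟨z₀, hz₀M, rfl⟩
end
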